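/- The max-min robust pricing problem max over feasible z of [min over gamma in [0,1]^I with sum_i gamma_i <= Gamma of sum_i sum_j P_ij (qhat_ij - gamma_i Delta_ij) z_ij] equals the mixed-integer linear program max over feasible z, mu >= 0, nu >= 0 of sum_i (sum_j P_ij qhat_ij z_ij - mu_i) - Gamma nu subject to mu_i + nu - sum_j P_ij Delta_ij z_ij >= 0 for all i. -/

import Mathlib

open Finset Set

lemma knapsack_duality_sorted {n : ℕ} (c : Fin n → ℝ) (hc : ∀ m, 0 ≤ c m)
    (hanti : Antitone c) (Γ : ℝ) (hΓ : 0 ≤ Γ) :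
    ∃ (γ μ : Fin n → ℝ) (ν : ℝ), (∀ m, 0 ≤ γ m ∧ γ m ≤ 1) ∧ (∑ m, γ m ≤ Γ) ∧
      (∀ m, 0 ≤ μ m) ∧ 0 ≤ ν ∧ (∀ m, c m ≤ μ m + ν) ∧
      ∑ m, γ m * c m = ∑ m, μ m + Γ * ν := by
  by_cases hbig : (n : ℝ) ≤ Γ
  · exact ⟨fun _ => 1, c, 0, fun m => ⟨zero_le_one, le_refl 1⟩, by simpa using hbig,
      hc, le_refl 0, fun m => by simp, by simp⟩
  · push_neg at hbig
    set k : ℕ := ⌊Γ⌋₊ with hkdef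
    have hkΓ : (k : ℝ) ≤ Γ := Nat.floor_le hΓ
    have hΓk1 : Γ < (k : ℝ) + 1 := Nat.lt_floor_add_one Γ
    have hkn : k < n := by
      have : (k : ℝ) < (n : ℝ) := lt_of_le_of_lt hkΓ hbig
      exact_mod_cast this
    set kf : Fin n := ⟨k, hkn⟩ with hkf
    set ν : ℝ := c kf with hν
    have hmle : ∀ m : Fin n, (m : ℕ) < k → ν ≤ c m := by
      intro m hm
      exact hanti (by simp [hkf, Fin.le_def]; omega)
    have hmge : ∀ m : Fin n, ¬ (m : ℕ) < k → c m ≤ ν := by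
      intro m hm
      exact hanti (by simp [hkf, Fin.le_def]; omega)
    have hone : ∑ m : Fin n, (if (m : ℕ) < k then (1:ℝ) else 0) = k := by
      rw [Fin.sum_univ_eq_sum_range (fun i => if i < k then (1:ℝ) else 0) n,
        ← Finset.sum_filter]
      have : (Finset.range n).filter (fun i => i < k) = Finset.range k := by
        ext i; simp [Finset.mem_filter]; omega
      simp [this]
    refine ⟨fun m => (if (m : ℕ) < k then (1:ℝ) else 0) + (if m = kf then Γ - k else 0),
      fun m => if (m : ℕ) < k then c m - ν else 0, ν, ?_, ?_, ?_, hc kf, ?_, ?_⟩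
    · intro m
      rcases eq_or_ne m kf with rfl | h2
      · have h1 : ¬((kf : ℕ) < k) := by simp [hkf]
        simp only [h1, if_false, if_true, eq_self_iff_true, ite_true, zero_add]
        refine ⟨by linarith, by linarith⟩
      · by_cases h1 : (m : ℕ) < k <;> simp [h1, h2]
    · rw [Finset.sum_add_distrib, hone, Finset.sum_ite_eq' Finset.univ kf]
      simp
    · intro m
      by_cases h1 : (m : ℕ) < k <;> simp only [h1, if_true, if_false]
      · linarith [hmle m h1]
      · exact le_refl 0
    · intro m
      by_cases h1 : (m : ℕ) < k <;> simp only [h1, if_true, if_false]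
      · linarith
      · linarith [hmge m h1]
    · have hγc : ∑ m : Fin n,
          ((if (m : ℕ) < k then (1:ℝ) else 0) + (if m = kf then Γ - k else 0)) * c m
          = (∑ m : Fin n, if (m : ℕ) < k then c m else 0) + (Γ - k) * ν := by
        rw [show (fun m : Fin n =>
            ((if (m : ℕ) < k then (1:ℝ) else 0) + (if m = kf then Γ - k else 0)) * c m)
            = fun m : Fin n => (if (m : ℕ) < k then c m else 0)
              + (if m = kf then (Γ - k) * c m else 0) from ?_]
        · rw [Finset.sum_add_distrib, Finset.sum_ite_eq' Finset.univ kf]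
          simp [hν]
        · funext m
          rcases eq_or_ne m kf with rfl | h2
          · have h1 : ¬((kf : ℕ) < k) := by simp [hkf]
            simp only [h1, if_false, if_true, eq_self_iff_true, ite_true]; ring
          · by_cases h1 : (m : ℕ) < k <;> simp only [h1, h2, if_true, if_false] <;> ring
      have hμs : ∑ m : Fin n, (if (m : ℕ) < k then c m - ν else 0)
          = (∑ m : Fin n, if (m : ℕ) < k then c m else 0) - (k : ℝ) * ν := by
        rw [show (fun m : Fin n => if (m : ℕ) < k then c m - ν else 0)
            = fun m : Fin n => (if (m : ℕ) < k then c m else 0)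
              - ν * (if (m : ℕ) < k then (1:ℝ) else 0) from ?_]
        · rw [Finset.sum_sub_distrib, ← Finset.mul_sum, hone]; ring
        · funext m
          by_cases h1 : (m : ℕ) < k <;> simp only [h1, if_true, if_false] <;> ring
      rw [hγc, hμs]; ring

lemma knapsack_duality {I : Type*} [Fintype I] (b : I → ℝ) (hb : ∀ i, 0 ≤ b i)
    (Γ : ℝ) (hΓ : 0 ≤ Γ) :
    ∃ (γ μ : I → ℝ) (ν : ℝ), (∀ i, 0 ≤ γ i ∧ γ i ≤ 1) ∧ (∑ i, γ i ≤ Γ) ∧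
      (∀ i, 0 ≤ μ i) ∧ 0 ≤ ν ∧ (∀ i, b i ≤ μ i + ν) ∧
      ∑ i, γ i * b i = ∑ i, μ i + Γ * ν := by
  classical
  set n := Fintype.card I with hn
  set e : I ≃ Fin n := Fintype.equivFin I with he
  set f : Fin n → ℝ := fun m => -(b (e.symm m)) with hf
  set σ : Equiv.Perm (Fin n) := Tuple.sort f with hσ
  set φ : Fin n ≃ I := (σ : Fin n ≃ Fin n).trans e.symm with hφ
  set c : Fin n → ℝ := fun m => b (φ m) with hc
  have hanti : Antitone c := by
    have hmono := Tuple.monotone_sort f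
    intro x y hxy
    have := hmono hxy
    simp only [Function.comp_apply, hf] at this
    simpa [hc, hφ] using neg_le_neg this
  have hcnn : ∀ m, 0 ≤ c m := fun m => hb _
  obtain ⟨γf, μf, νf, hγf, hγsum, hμf, hνf, hdual, heq⟩ :=
    knapsack_duality_sorted c hcnn hanti Γ hΓ
  refine ⟨fun i => γf (φ.symm i), fun i => μf (φ.symm i), νf,
    fun i => hγf _, ?_, fun i => hμf _, hνf, ?_, ?_⟩
  · calc ∑ i, γf (φ.symm i) = ∑ m, γf (φ.symm (φ m)) := (Equiv.sum_comp φ _).symm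
      _ = ∑ m, γf m := by simp
      _ ≤ Γ := hγsum
  · intro i
    have := hdual (φ.symm i)
    simpa [hc] using this
  · calc ∑ i, γf (φ.symm i) * b i = ∑ m, γf (φ.symm (φ m)) * b (φ m) :=
        (Equiv.sum_comp φ _).symm
      _ = ∑ m, γf m * c m := by simp [hc]
      _ = ∑ m, μf m + Γ * νf := heq
      _ = ∑ i, μf (φ.symm i) + Γ * νf := by
          congr 1
          calc ∑ m, μf m = ∑ m, μf (φ.symm (φ m)) := by simp
            _ = ∑ i, μf (φ.symm i) := Equiv.sum_comp φ (fun i => μf (φ.symm i))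

lemma weak_duality {I : Type*} [Fintype I] (b γ μ : I → ℝ) (ν Γ : ℝ)
    (hγ : ∀ i, 0 ≤ γ i ∧ γ i ≤ 1) (hsum : ∑ i, γ i ≤ Γ)
    (hμ : ∀ i, 0 ≤ μ i) (hν : 0 ≤ ν) (hdual : ∀ i, b i ≤ μ i + ν) :
    ∑ i, γ i * b i ≤ ∑ i, μ i + Γ * ν := by
  calc ∑ i, γ i * b i ≤ ∑ i, γ i * (μ i + ν) :=
        Finset.sum_le_sum fun i _ => mul_le_mul_of_nonneg_left (hdual i) (hγ i).1
    _ = ∑ i, γ i * μ i + (∑ i, γ i) * ν := by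
        simp [mul_add, Finset.sum_add_distrib, Finset.sum_mul]
    _ ≤ ∑ i, μ i + Γ * ν :=
        add_le_add (Finset.sum_le_sum fun i _ => mul_le_of_le_one_left (hμ i) (hγ i).2)
          (mul_le_mul_of_nonneg_right hsum hν)

/-- The max–min robust pricing problem equals the MILO reformulation obtained
by dualizing the inner minimization for each fixed feasible `z`. -/
theorem robust_maxmin_eq_milo
    {I J : Type*} [Fintype I] [Fintype J]
    (P qhat Δ : I → J → ℝ) (Γ : ℝ)
    (hP : ∀ i j, 0 ≤ P i j) (hq : ∀ i j, 0 ≤ qhat i j)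
    (hΔ0 : ∀ i j, 0 ≤ Δ i j) (hΔq : ∀ i j, Δ i j ≤ qhat i j)
    (hΓ : 0 ≤ Γ)
    (Z : Set (I → J → ℝ)) (hZne : Z.Nonempty)
    (hZbin : ∀ z ∈ Z, ∀ i j, z i j = 0 ∨ z i j = 1)
    (hZsum : ∀ z ∈ Z, ∀ i, ∑ j, z i j = 1) :
    sSup {v : ℝ | ∃ z ∈ Z,
        v = sInf {w : ℝ | ∃ γ : I → ℝ, (∀ i, 0 ≤ γ i ∧ γ i ≤ 1) ∧ (∑ i, γ i ≤ Γ) ∧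
            w = ∑ i, ∑ j, P i j * (qhat i j - γ i * Δ i j) * z i j}}
    = sSup {v : ℝ | ∃ z ∈ Z, ∃ (μ : I → ℝ) (ν : ℝ), (∀ i, 0 ≤ μ i) ∧ 0 ≤ ν ∧
        (∀ i, μ i + ν - ∑ j, P i j * Δ i j * z i j ≥ 0) ∧
        v = (∑ i, (∑ j, P i j * qhat i j * z i j - μ i)) - Γ * ν} := by
  classical
  -- abbreviations
  set C : ℝ := ∑ i, ∑ j, P i j * qhat i j with hC
  have hz01 : ∀ z ∈ Z, ∀ i j, 0 ≤ z i j ∧ z i j ≤ 1 := by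
    intro z hz i j
    rcases hZbin z hz i j with h | h <;> simp [h]
  have hbnn : ∀ z ∈ Z, ∀ i, 0 ≤ ∑ j, P i j * Δ i j * z i j := by
    intro z hz i
    exact Finset.sum_nonneg fun j _ =>
      mul_nonneg (mul_nonneg (hP i j) (hΔ0 i j)) (hz01 z hz i j).1
  have haC : ∀ z ∈ Z, ∑ i, ∑ j, P i j * qhat i j * z i j ≤ C := by
    intro z hz
    refine Finset.sum_le_sum fun i _ => Finset.sum_le_sum fun j _ => ?_
    exact mul_le_of_le_one_right (mul_nonneg (hP i j) (hq i j)) (hz01 z hz i j).2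
  have halg : ∀ (z : I → J → ℝ) (γ : I → ℝ),
      ∑ i, ∑ j, P i j * (qhat i j - γ i * Δ i j) * z i j
        = (∑ i, ∑ j, P i j * qhat i j * z i j)
          - ∑ i, γ i * (∑ j, P i j * Δ i j * z i j) := by
    intro z γ
    rw [← Finset.sum_sub_distrib]
    refine Finset.sum_congr rfl fun i _ => ?_
    rw [Finset.mul_sum, ← Finset.sum_sub_distrib]
    refine Finset.sum_congr rfl fun j _ => ?_
    ring
  -- the inner feasible set is nonempty (take γ = 0)
  have hSne : ∀ z : I → J → ℝ,
      (∑ i, ∑ j, P i j * qhat i j * z i j) ∈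
        {w : ℝ | ∃ γ : I → ℝ, (∀ i, 0 ≤ γ i ∧ γ i ≤ 1) ∧ (∑ i, γ i ≤ Γ) ∧
            w = ∑ i, ∑ j, P i j * (qhat i j - γ i * Δ i j) * z i j} := by
    intro z
    refine ⟨fun _ => 0, fun i => ⟨le_rfl, zero_le_one⟩, by simpa using hΓ, ?_⟩
    rw [halg z (fun _ => 0)]
    simp
  -- strong duality for each fixed z
  have hdual : ∀ z ∈ Z, ∃ (μ : I → ℝ) (ν : ℝ), (∀ i, 0 ≤ μ i) ∧ 0 ≤ ν ∧
      (∀ i, μ i + ν - ∑ j, P i j * Δ i j * z i j ≥ 0) ∧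
      sInf {w : ℝ | ∃ γ : I → ℝ, (∀ i, 0 ≤ γ i ∧ γ i ≤ 1) ∧ (∑ i, γ i ≤ Γ) ∧
          w = ∑ i, ∑ j, P i j * (qhat i j - γ i * Δ i j) * z i j}
        = (∑ i, (∑ j, P i j * qhat i j * z i j - μ i)) - Γ * ν := by
    intro z hz
    obtain ⟨γ, μ, ν, hγ, hγs, hμ, hν, hd, heq⟩ :=
      knapsack_duality (fun i => ∑ j, P i j * Δ i j * z i j) (hbnn z hz) Γ hΓ
    refine ⟨μ, ν, hμ, hν, fun i => by have := hd i; simp only [ge_iff_le]; linarith, ?_⟩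
    set L : ℝ := (∑ i, (∑ j, P i j * qhat i j * z i j - μ i)) - Γ * ν with hLdef
    have hL : L = (∑ i, ∑ j, P i j * qhat i j * z i j) - (∑ i, μ i + Γ * ν) := by
      rw [hLdef, Finset.sum_sub_distrib]; ring
    have hlb : ∀ w ∈ {w : ℝ | ∃ γ : I → ℝ, (∀ i, 0 ≤ γ i ∧ γ i ≤ 1) ∧ (∑ i, γ i ≤ Γ) ∧
        w = ∑ i, ∑ j, P i j * (qhat i j - γ i * Δ i j) * z i j}, L ≤ w := by
      rintro w ⟨γ', hγ', hγ's, rfl⟩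
      rw [halg z γ', hL]
      have := weak_duality (fun i => ∑ j, P i j * Δ i j * z i j) γ' μ ν Γ hγ' hγ's hμ hν hd
      linarith
    have hmem : L ∈ {w : ℝ | ∃ γ : I → ℝ, (∀ i, 0 ≤ γ i ∧ γ i ≤ 1) ∧ (∑ i, γ i ≤ Γ) ∧
        w = ∑ i, ∑ j, P i j * (qhat i j - γ i * Δ i j) * z i j} := by
      refine ⟨γ, hγ, hγs, ?_⟩
      rw [halg z γ, hL, heq]
    exact le_antisymm (csInf_le ⟨L, hlb⟩ hmem) (le_csInf ⟨L, hmem⟩ hlb)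
  -- bounds on the two sets
  have hBub : ∀ v ∈ {v : ℝ | ∃ z ∈ Z, ∃ (μ : I → ℝ) (ν : ℝ), (∀ i, 0 ≤ μ i) ∧ 0 ≤ ν ∧
      (∀ i, μ i + ν - ∑ j, P i j * Δ i j * z i j ≥ 0) ∧
      v = (∑ i, (∑ j, P i j * qhat i j * z i j - μ i)) - Γ * ν}, v ≤ C := by
    rintro v ⟨z, hz, μ, ν, hμ, hν, hcon, rfl⟩
    have h1 : ∑ i, (∑ j, P i j * qhat i j * z i j - μ i)
        = (∑ i, ∑ j, P i j * qhat i j * z i j) - ∑ i, μ i := Finset.sum_sub_distrib _ _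
    have h2 : (0:ℝ) ≤ ∑ i, μ i := Finset.sum_nonneg fun i _ => hμ i
    have h3 : (0:ℝ) ≤ Γ * ν := mul_nonneg hΓ hν
    have := haC z hz
    linarith [h1 ▸ le_refl ((∑ i, ∑ j, P i j * qhat i j * z i j) - ∑ i, μ i - Γ * ν),
      show (∑ i, (∑ j, P i j * qhat i j * z i j - μ i)) - Γ * ν
        = (∑ i, ∑ j, P i j * qhat i j * z i j) - ∑ i, μ i - Γ * ν from by rw [h1]]
  have hAub : ∀ v ∈ {v : ℝ | ∃ z ∈ Z,
      v = sInf {w : ℝ | ∃ γ : I → ℝ, (∀ i, 0 ≤ γ i ∧ γ i ≤ 1) ∧ (∑ i, γ i ≤ Γ) ∧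
          w = ∑ i, ∑ j, P i j * (qhat i j - γ i * Δ i j) * z i j}}, v ≤ C := by
    rintro v ⟨z, hz, rfl⟩
    obtain ⟨μ, ν, hμ, hν, hcon, heq⟩ := hdual z hz
    rw [heq]
    exact hBub _ ⟨z, hz, μ, ν, hμ, hν, hcon, rfl⟩
  -- nonemptiness
  obtain ⟨z₀, hz₀⟩ := hZne
  have hAne : {v : ℝ | ∃ z ∈ Z,
      v = sInf {w : ℝ | ∃ γ : I → ℝ, (∀ i, 0 ≤ γ i ∧ γ i ≤ 1) ∧ (∑ i, γ i ≤ Γ) ∧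
          w = ∑ i, ∑ j, P i j * (qhat i j - γ i * Δ i j) * z i j}}.Nonempty :=
    ⟨_, z₀, hz₀, rfl⟩
  have hBne : {v : ℝ | ∃ z ∈ Z, ∃ (μ : I → ℝ) (ν : ℝ), (∀ i, 0 ≤ μ i) ∧ 0 ≤ ν ∧
      (∀ i, μ i + ν - ∑ j, P i j * Δ i j * z i j ≥ 0) ∧
      v = (∑ i, (∑ j, P i j * qhat i j * z i j - μ i)) - Γ * ν}.Nonempty := by
    obtain ⟨μ, ν, hμ, hν, hcon, _⟩ := hdual z₀ hz₀
    exact ⟨_, z₀, hz₀, μ, ν, hμ, hν, hcon, rfl⟩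
  refine le_antisymm ?_ ?_
  · -- sSup A ≤ sSup B
    refine csSup_le hAne ?_
    rintro v ⟨z, hz, rfl⟩
    obtain ⟨μ, ν, hμ, hν, hcon, heq⟩ := hdual z hz
    rw [heq]
    exact le_csSup ⟨C, hBub⟩ ⟨z, hz, μ, ν, hμ, hν, hcon, rfl⟩
  · -- sSup B ≤ sSup A
    refine csSup_le hBne ?_
    rintro v ⟨z, hz, μ, ν, hμ, hν, hcon, rfl⟩
    have hvle : (∑ i, (∑ j, P i j * qhat i j * z i j - μ i)) - Γ * ν
        ≤ sInf {w : ℝ | ∃ γ : I → ℝ, (∀ i, 0 ≤ γ i ∧ γ i ≤ 1) ∧ (∑ i, γ i ≤ Γ) ∧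
            w = ∑ i, ∑ j, P i j * (qhat i j - γ i * Δ i j) * z i j} := by
      refine le_csInf ⟨_, hSne z⟩ ?_
      rintro w ⟨γ', hγ', hγ's, rfl⟩
      rw [halg z γ', Finset.sum_sub_distrib]
      have := weak_duality (fun i => ∑ j, P i j * Δ i j * z i j) γ' μ ν Γ hγ' hγ's hμ hν
        (fun i => by have := hcon i; simp only [ge_iff_le] at this; linarith)
      linarith
    exact hvle.trans (le_csSup ⟨C, hAub⟩ ⟨z, hz, rfl⟩)
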